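/- arXiv:2012.09993 — 4 statements merged into one kernel-verified Lean document; each statement's English description precedes it below -/
import Mathlib

section
/- Let x and y be nonzero elements of the Hahn series field F = HahnSeries ℝ ℝ. Then x.order = y.order and leadingCoeff x = leadingCoeff y if and only if 0 < orderTop (x / y - 1), i.e. if and only if x / y lies in 1 + M. (Thus the quotient RV = F^× / (1 + M) is identified with the group of leading terms.) -/
/-! Writing `x = (x / y) * y`, the order is additive and the leading coefficient multiplicative,
so `x` and `y` share order and leading coefficient exactly when `x / y` has order `0` and leading
coefficient `1`, i.e. when `x / y - 1` has positive order. -/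

open HahnSeries

namespace HahnSeries

theorem orderTop_mul_eq_and_leadingCoeff_mul_eq_iff {Γ R : Type*} [AddCommMonoid Γ]
    [LinearOrder Γ] [IsOrderedCancelAddMonoid Γ] [Ring R] [IsDomain R] {y : R⟦Γ⟧} (hy : y ≠ 0)
    (z : R⟦Γ⟧) :
    ((z * y).orderTop = y.orderTop ∧ (z * y).leadingCoeff = y.leadingCoeff) ↔
      (z.orderTop = 0 ∧ z.leadingCoeff = 1) := by
  rw [orderTop_mul, leadingCoeff_mul, mul_eq_right₀ (leadingCoeff_ne_zero.mpr hy)]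
  nth_rw 2 [← zero_add y.orderTop]
  rw [WithTop.add_right_inj (orderTop_ne_top.mpr hy)]

theorem orderTop_eq_and_leadingCoeff_eq_iff_orderTop_div_sub_one_pos {Γ R : Type*}
    [AddCommGroup Γ] [LinearOrder Γ] [IsOrderedAddMonoid Γ] [Field R] {x y : R⟦Γ⟧}
    (hy : y ≠ 0) :
    (x.orderTop = y.orderTop ∧ x.leadingCoeff = y.leadingCoeff) ↔ 0 < (x / y - 1).orderTop := by
  rw [orderTop_self_sub_one_pos_iff, ← orderTop_mul_eq_and_leadingCoeff_mul_eq_iff hy,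
    div_mul_cancel₀ x hy]

end HahnSeries

theorem stmt_0 (x y : HahnSeries ℝ ℝ) (hx : x ≠ 0) (hy : y ≠ 0) :
    (x.order = y.order ∧ x.leadingCoeff = y.leadingCoeff) ↔
      0 < (x / y - 1).orderTop := by
  rw [← orderTop_eq_and_leadingCoeff_eq_iff_orderTop_div_sub_one_pos hy,
    ← order_eq_orderTop_of_ne_zero hx, ← order_eq_orderTop_of_ne_zero hy, WithTop.coe_inj]
end

section
/- Let x, y be nonzero elements of the Hahn series field F = HahnSeries ℝ ℝ whose leading terms differ, i.e. (x.order, leadingCoeff x) ≠ (y.order, leadingCoeff y). Then 0 < leadingCoeff (y − x) holds if and only if either (x.order = y.order and leadingCoeff x < leadingCoeff y), or (x.order < y.order and leadingCoeff x < 0), or (y.order < x.order and 0 < leadingCoeff y). (The ordering induced on the group of leading terms is the lexicographic-type ordering on ℝ ⊕ ℝ^×.) -/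
/-! The leading coefficient of `y - x` is `-leadingCoeff x`, `leadingCoeff y`, or
`leadingCoeff y - leadingCoeff x` according as `x.order < y.order`, `y.order < x.order`, or the
orders agree (where the leading coefficients differ, so no cancellation occurs). -/

open HahnSeries

namespace HahnSeries

variable {Γ R : Type*} [LinearOrder Γ] [Zero Γ] [AddGroup R] {x y : HahnSeries Γ R}

theorem orderTop_lt_orderTop_of_order_lt (hx : x ≠ 0) (h : x.order < y.order) :
    x.orderTop < y.orderTop := by
  obtain rfl | hy := eq_or_ne y 0
  · simpa using hx
  rw [← order_eq_orderTop_of_ne_zero hx, ← order_eq_orderTop_of_ne_zero hy]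
  exact_mod_cast h

theorem leadingCoeff_sub_of_order_lt (hx : x ≠ 0) (h : x.order < y.order) :
    (x - y).leadingCoeff = x.leadingCoeff :=
  leadingCoeff_sub (orderTop_lt_orderTop_of_order_lt hx h)

theorem leadingCoeff_sub_of_order_gt (hy : y ≠ 0) (h : y.order < x.order) :
    (x - y).leadingCoeff = -y.leadingCoeff := by
  rw [← neg_sub, leadingCoeff_neg, leadingCoeff_sub_of_order_lt hy h]

theorem leadingCoeff_sub_of_order_eq (h : x.order = y.order)
    (hc : x.leadingCoeff ≠ y.leadingCoeff) :
    (x - y).leadingCoeff = x.leadingCoeff - y.leadingCoeff := by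
  have hcoeff : (x - y).coeff x.order = x.leadingCoeff - y.leadingCoeff := by
    rw [coeff_sub, leadingCoeff_eq, leadingCoeff_eq, h]
  have hcoeff_ne : (x - y).coeff x.order ≠ 0 := hcoeff ▸ sub_ne_zero_of_ne hc
  have hxy : x - y ≠ 0 := ne_zero_of_coeff_ne_zero hcoeff_ne
  have horder : (x - y).order = x.order := by
    refine (order_le_of_coeff_ne_zero hcoeff_ne).antisymm (not_lt.mp fun hlt ↦ ?_)
    refine coeff_order_eq_zero.not.mpr hxy ?_
    rw [coeff_sub, coeff_eq_zero_of_lt_order hlt, coeff_eq_zero_of_lt_order (h ▸ hlt), sub_zero]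
  rw [leadingCoeff_eq, horder, hcoeff]

end HahnSeries

theorem stmt_5 (x y : HahnSeries ℝ ℝ) (hx : x ≠ 0) (hy : y ≠ 0)
    (hne : (x.order, x.leadingCoeff) ≠ (y.order, y.leadingCoeff)) :
    0 < (y - x).leadingCoeff ↔
      (x.order = y.order ∧ x.leadingCoeff < y.leadingCoeff) ∨
        (x.order < y.order ∧ x.leadingCoeff < 0) ∨
          (y.order < x.order ∧ 0 < y.leadingCoeff) := by
  rcases lt_trichotomy x.order y.order with h | h | h
  · rw [leadingCoeff_sub_of_order_gt hx h]
    simp [h, h.ne, h.not_gt]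
  · have hc : y.leadingCoeff ≠ x.leadingCoeff := fun hc ↦ hne (by rw [h, hc])
    rw [leadingCoeff_sub_of_order_eq h.symm hc]
    simp [h]
  · rw [leadingCoeff_sub_of_order_lt hy h]
    simp [h, h.ne', h.not_gt]
end

section
/- Let b, c be elements of the Hahn series field F = HahnSeries ℝ ℝ with 0 < orderTop b and 0 < orderTop c. Then the family n ↦ (n!)⁻¹ • bⁿ (n ∈ ℕ) is a summable family of Hahn series; writing E b for its sum (the restricted exponential), one has 0 < orderTop (E b − 1) and E (b + c) = (E b) · (E c). (Thus E is a group homomorphism from the additive group M into the multiplicative group 1 + M.) -/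
/-!
Since `0 < orderTop b`, the powers of `b` form a summable family, hence so do the `bⁿ / n!`.
Every term with `n ≥ 1` has positive order, so `E b - 1` does too. For multiplicativity, the
product of the families for `b` and `c` is the summable family `(i, j) ↦ bⁱ/i! * cʲ/j!`, whose sum
is `E b * E c`; by the binomial theorem its sums along the antidiagonals `i + j = n` are the terms
`(b + c)ⁿ / n!`, and regrouping a summable family along finite fibres does not change its sum.
-/

open Finset HahnSeries HahnSeries.SummableFamily
open scoped Nat

theorem inv_factorial_smul_add_pow {K A : Type*} [Field K] [CharZero K] [CommRing A]
    [Algebra K A] (x y : A) (n : ℕ) :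
    (n ! : K)⁻¹ • (x + y) ^ n =
      ∑ p ∈ antidiagonal n, ((p.1 ! : K)⁻¹ • x ^ p.1) * ((p.2 ! : K)⁻¹ • y ^ p.2) := by
  rw [(Commute.all x y).add_pow', smul_sum]
  refine sum_congr rfl fun p hp => ?_
  rw [HasAntidiagonal.mem_antidiagonal] at hp
  subst hp
  rw [← Nat.cast_smul_eq_nsmul K, smul_smul, smul_mul_smul_comm, Nat.cast_add_choose]
  congr 1
  field_simp [Nat.factorial_ne_zero]

namespace HahnSeries.SummableFamily

variable {Γ R α : Type*}

theorem lt_orderTop_hsum [LinearOrder Γ] [AddCommMonoid R] {s : SummableFamily Γ R α}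
    {γ : Γ} (h : ∀ a, γ < (s a).orderTop) : γ < s.hsum.orderTop := by
  rcases eq_or_ne s.hsum 0 with h0 | h0
  · simp [h0]
  obtain ⟨a, ha⟩ := Set.mem_iUnion.mp
    (support_hsum_subset (s.hsum.isWF_support.min_mem (support_nonempty_iff.2 h0)))
  rw [orderTop_of_ne_zero h0]
  exact (h a).trans_le (orderTop_le_of_coeff_ne_zero ha)

theorem hsum_eq_of_apply_eq_sum_antidiagonal [PartialOrder Γ] [AddCommMonoid R] {A : Type*}
    [AddMonoid A] [HasAntidiagonal A] (s : SummableFamily Γ R A) (t : SummableFamily Γ R (A × A))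
    (h : ∀ n, s n = ∑ p ∈ antidiagonal n, t p) : s.hsum = t.hsum := by
  classical
  ext g
  set u : Finset A := (s.finite_co_support g).toFinset ∪
    (t.finite_co_support g).toFinset.image fun p => p.1 + p.2
  have hs : s.hsum.coeff g = ∑ n ∈ u, (s n).coeff g :=
    coeff_hsum_eq_sum_of_subset fun n hn => mem_union_left _ ((Set.Finite.mem_toFinset _).2 hn)
  have ht : t.hsum.coeff g = ∑ p ∈ u.biUnion antidiagonal, (t p).coeff g :=
    coeff_hsum_eq_sum_of_subset fun p hp => mem_biUnion.2 ⟨p.1 + p.2,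
      mem_union_right _ (mem_image_of_mem _ ((Set.Finite.mem_toFinset _).2 hp)),
      HasAntidiagonal.mem_antidiagonal.2 rfl⟩
  have hdisj : (u : Set A).PairwiseDisjoint antidiagonal := fun m _ n _ hmn =>
    disjoint_left.2 fun p hp hp' => hmn
      ((HasAntidiagonal.mem_antidiagonal.1 hp).symm.trans (HasAntidiagonal.mem_antidiagonal.1 hp'))
  rw [hs, ht, sum_biUnion hdisj]
  exact sum_congr rfl fun n _ => by rw [h n, coeff_sum]

variable [AddCommMonoid Γ] [LinearOrder Γ] [IsOrderedCancelAddMonoid Γ] {K : Type*} [Field K]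

def IsExpFamily (x : K⟦Γ⟧) (s : SummableFamily Γ K ℕ) : Prop :=
  ∀ n, s n = (n ! : K)⁻¹ • x ^ n

theorem IsExpFamily.orderTop_hsum_sub_one_pos {x : K⟦Γ⟧} {s : SummableFamily Γ K ℕ}
    (hs : IsExpFamily x s) (hx : 0 < x.orderTop) : 0 < (s.hsum - 1).orderTop := by
  rw [← hsum_single 0 1, ← hsum_sub]
  refine lt_orderTop_hsum fun n => ?_
  rcases n with _ | n
  · simp [hs 0]
  · rw [sub_apply, single_toFun, Pi.single_eq_of_ne n.succ_ne_zero, sub_zero, hs]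
    calc (0 : WithTop Γ) < (n + 1) • x.orderTop := (nsmul_pos_iff n.succ_ne_zero).2 hx
      _ ≤ (x ^ (n + 1)).orderTop := orderTop_nsmul_le_orderTop_pow
      _ ≤ _ := not_lt.1 (orderTop_smul_not_lt _ _)

theorem IsExpFamily.hsum_add [CharZero K] {x y : K⟦Γ⟧} {s t u : SummableFamily Γ K ℕ}
    (hs : IsExpFamily x s) (ht : IsExpFamily y t) (hu : IsExpFamily (x + y) u) :
    u.hsum = s.hsum * t.hsum := by
  rw [← hsum_mul]
  refine hsum_eq_of_apply_eq_sum_antidiagonal u _ fun n => ?_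
  rw [hu n, inv_factorial_smul_add_pow]
  exact sum_congr rfl fun p _ => by rw [mul_toFun, hs, ht]

end HahnSeries.SummableFamily

theorem stmt_9_general (b c : HahnSeries ℝ ℝ) (hb : 0 < b.orderTop) :
    -- the family `n ↦ (n!)⁻¹ • bⁿ` is summable
    (∃ S : SummableFamily ℝ ℝ ℕ, ∀ n : ℕ, S n = ((n.factorial : ℝ))⁻¹ • b ^ n) ∧
    -- writing `E b` for the sum of this family, `E b ∈ 1 + M` and `E (b + c) = E b * E c`
    (∀ Sb Sc Sbc : SummableFamily ℝ ℝ ℕ,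
      (∀ n : ℕ, Sb n = ((n.factorial : ℝ))⁻¹ • b ^ n) →
      (∀ n : ℕ, Sc n = ((n.factorial : ℝ))⁻¹ • c ^ n) →
      (∀ n : ℕ, Sbc n = ((n.factorial : ℝ))⁻¹ • (b + c) ^ n) →
      0 < (Sb.hsum - 1).orderTop ∧ Sbc.hsum = Sb.hsum * Sc.hsum) :=
  ⟨⟨smulFamily (fun n => (n ! : ℝ)⁻¹) (powers b), fun n => by simp [hb]⟩,
    fun _ _ _ hSb hSc hSbc => ⟨IsExpFamily.orderTop_hsum_sub_one_pos hSb hb,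
      IsExpFamily.hsum_add hSb hSc hSbc⟩⟩

theorem stmt_9 (b c : HahnSeries ℝ ℝ) (hb : 0 < b.orderTop) (hc : 0 < c.orderTop) :
    -- the family `n ↦ (n!)⁻¹ • bⁿ` is summable
    (∃ S : SummableFamily ℝ ℝ ℕ, ∀ n : ℕ, S n = ((n.factorial : ℝ))⁻¹ • b ^ n) ∧
    -- writing `E b` for the sum of this family, `E b ∈ 1 + M` and `E (b + c) = E b * E c`
    (∀ Sb Sc Sbc : SummableFamily ℝ ℝ ℕ,
      (∀ n : ℕ, Sb n = ((n.factorial : ℝ))⁻¹ • b ^ n) →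
      (∀ n : ℕ, Sc n = ((n.factorial : ℝ))⁻¹ • c ^ n) →
      (∀ n : ℕ, Sbc n = ((n.factorial : ℝ))⁻¹ • (b + c) ^ n) →
      0 < (Sb.hsum - 1).orderTop ∧ Sbc.hsum = Sb.hsum * Sc.hsum) :=
  stmt_9_general b c hb
end

section
/- In the Hahn series field F = HahnSeries ℝ ℝ, for a ∈ O (i.e. 0 ≤ orderTop a) one has 0 < orderTop (a − single 0 (a.coeff 0)); define expO a = single 0 (Real.exp (a.coeff 0)) · E (a − single 0 (a.coeff 0)). Then expO (a + b) = (expO a) · (expO b) for all a, b ∈ O, expO is injective on O, and the image of O under expO is exactly the set U⁺ of positive units {x ∈ F : x ≠ 0, x.order = 0, 0 < leadingCoeff x}. (The real exponential extends to a group isomorphism from the additive group O onto the multiplicative group U⁺.) -/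
open HahnSeries

/-- The exponential summable family `n ↦ (n!)⁻¹ • bⁿ` of an element `b` of positive
order in the Hahn series field. -/
noncomputable def expFamily (b : HahnSeries ℝ ℝ) (hb : 0 < b.orderTop) :
    SummableFamily ℝ ℝ ℕ where
  toFun n := ((n.factorial : ℝ))⁻¹ • b ^ n
  isPWO_iUnion_support' := by
    refine (SummableFamily.powers b).isPWO_iUnion_support.mono ?_
    intro g hg
    obtain ⟨n, hn⟩ := Set.mem_iUnion.mp hg
    refine Set.mem_iUnion.mpr ⟨n, ?_⟩
    have hn' : (((n.factorial : ℝ))⁻¹ • b ^ n).coeff g ≠ 0 := hn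
    have hbn : (b ^ n).coeff g ≠ 0 := fun h => hn' (by rw [HahnSeries.coeff_smul, h, smul_zero])
    rw [SummableFamily.powers_of_orderTop_pos hb]
    exact hbn
  finite_co_support' g := by
    refine ((SummableFamily.powers b).finite_co_support g).subset ?_
    intro n hn
    simp only [Set.mem_setOf_eq] at hn ⊢
    intro h
    apply hn
    rw [HahnSeries.coeff_smul]
    have h' : (b ^ n).coeff g = 0 := by
      rw [← SummableFamily.powers_of_orderTop_pos hb]; exact h
    rw [h', smul_zero]

/-- The restricted exponential on the maximal ideal of the valuation ring:
`E b = ∑_{n} (n!)⁻¹ bⁿ` when `0 < orderTop b`, and (junk value) `0` otherwise. -/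
noncomputable def E (b : HahnSeries ℝ ℝ) : HahnSeries ℝ ℝ :=
  if hb : 0 < b.orderTop then (expFamily b hb).hsum else 0

/-- The exponential on the valuation ring `O = {x : 0 ≤ orderTop x}`, combining the
real exponential on the constant term with the restricted exponential `E`. -/
noncomputable def expO (a : HahnSeries ℝ ℝ) : HahnSeries ℝ ℝ :=
  HahnSeries.single (0 : ℝ) (Real.exp (a.coeff 0)) *
    E (a - HahnSeries.single (0 : ℝ) (a.coeff 0))

/-!
The Euler derivation `D = t d/dt`, which multiplies the coefficient of `t ^ g` by `g`, has only
the constants in its kernel, and the chain rule for substitution of power series gives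
`D (E b) = E b * D b`. Hence two series `y, z ∈ 1 + 𝔪` with `D y * z = y * D z` coincide, since
`y / z` is a constant with constant term `1`. This gives `E (b + c) = E b * E c`, and, because
`(1 + X) * log'(1 + X) = 1`, also `E (log (1 + u)) = 1 + u`, which yields every positive unit
after the positive real leading coefficient is split off. Finally `E b = 1` forces `D b = 0`,
hence `b = 0`, which gives injectivity.
-/

namespace PowerSeries

theorem one_add_X_mul_derivative_log (A : Type*) [CommRing A] [Algebra ℚ A] :
    (1 + X) * d⁄dX A (log A) = 1 := by
  have h := congrArg (rescale (-1 : A)) (mk_one_mul_one_sub_eq_one (S := A))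
  rw [map_mul, map_sub, map_one, rescale_X, rescale_mk] at h
  rw [deriv_log]
  convert h using 1
  simp only [map_pow, map_neg, map_one, Pi.one_apply, mul_one]
  ring

end PowerSeries

namespace HahnSeries

section OrderTop

variable {Γ R : Type*}

theorem zero_lt_orderTop_iff_forall [LinearOrder Γ] [Zero Γ] [Zero R] {x : R⟦Γ⟧} :
    0 < x.orderTop ↔ ∀ g ≤ 0, x.coeff g = 0 := by
  refine ⟨fun h g hg => coeff_eq_zero_of_lt_orderTop ((WithTop.coe_le_coe.2 hg).trans_lt h),
    fun h => ?_⟩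
  by_contra! hle
  obtain ⟨g, hg⟩ := WithTop.ne_top_iff_exists.1 (ne_top_of_le_ne_top (by simp) hle)
  exact coeff_orderTop_ne hg.symm (h g (WithTop.coe_le_coe.1 (hg ▸ hle)))

theorem orderTop_eq_zero_iff [LinearOrder Γ] [Zero Γ] [Zero R] {x : R⟦Γ⟧} :
    x.orderTop = 0 ↔ x ≠ 0 ∧ x.order = 0 := by
  rcases eq_or_ne x 0 with rfl | hx
  · simp
  · rw [← order_eq_orderTop_of_ne_zero hx, WithTop.coe_eq_zero]
    exact ⟨fun h => ⟨hx, h⟩, And.right⟩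

theorem zero_lt_orderTop_sub_single_coeff_zero [LinearOrder Γ] [Zero Γ] [AddGroup R]
    {x : R⟦Γ⟧} (hx : 0 ≤ x.orderTop) : 0 < (x - single 0 (x.coeff 0)).orderTop := by
  refine zero_lt_orderTop_iff_forall.2 fun g hg => ?_
  rcases hg.lt_or_eq with hg | rfl
  · rw [coeff_sub, coeff_single_of_ne hg.ne,
      coeff_eq_zero_of_lt_orderTop ((WithTop.coe_lt_coe.2 hg).trans_le hx), sub_zero]
  · rw [coeff_sub, coeff_single_same, sub_self]

theorem coeff_zero_eq_one_of_orderTop_sub_one_pos [LinearOrder Γ] [Zero Γ] [Ring R]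
    {x : R⟦Γ⟧} (hx : 0 < (x - 1).orderTop) : x.coeff 0 = 1 := by
  have := zero_lt_orderTop_iff_forall.1 hx 0 le_rfl
  rwa [coeff_sub, coeff_one, if_pos rfl, sub_eq_zero] at this

theorem ne_zero_of_orderTop_sub_one_pos [LinearOrder Γ] [Zero Γ] [Ring R]
    [Nontrivial R] {x : R⟦Γ⟧} (hx : 0 < (x - 1).orderTop) : x ≠ 0 :=
  ne_zero_of_coeff_ne_zero (g := 0) <| by
    rw [coeff_zero_eq_one_of_orderTop_sub_one_pos hx]; exact one_ne_zero

theorem orderTop_mul_sub_one_pos [AddCommMonoid Γ] [LinearOrder Γ]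
    [IsOrderedCancelAddMonoid Γ] [Ring R] [NoZeroDivisors R] [Nontrivial R] {x y : R⟦Γ⟧}
    (hx : 0 < (x - 1).orderTop) (hy : 0 < (y - 1).orderTop) : 0 < (x * y - 1).orderTop := by
  rw [orderTop_self_sub_one_pos_iff] at *
  rw [orderTop_mul, leadingCoeff_mul, hx.1, hy.1, hx.2, hy.2, add_zero, mul_one]
  exact ⟨rfl, rfl⟩

theorem zero_lt_orderTop_heval_sub_single [AddCommMonoid Γ] [LinearOrder Γ]
    [IsOrderedCancelAddMonoid Γ] [CommRing R] {x : R⟦Γ⟧} (hx : 0 < x.orderTop)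
    (f : PowerSeries R) : 0 < (PowerSeries.heval x f - single 0 f.constantCoeff).orderTop := by
  refine zero_lt_orderTop_iff_forall.2 fun g hg => ?_
  rw [coeff_sub, PowerSeries.coeff_heval, finsum_eq_single _ 0 fun n hn => ?_]
  · by_cases hg0 : g = 0 <;> simp [hg0]
  · simp only [SummableFamily.coeff_apply, SummableFamily.smulFamily_toFun, coeff_smul,
      smul_eq_mul, SummableFamily.powers_of_orderTop_pos hx]
    refine mul_eq_zero_of_right _ (coeff_eq_zero_of_lt_orderTop ?_)
    calc (g : WithTop Γ) ≤ 0 := WithTop.coe_le_coe.2 hg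
      _ < n • x.orderTop := (nsmul_pos_iff hn).2 hx
      _ ≤ (x ^ n).orderTop := orderTop_nsmul_le_orderTop_pow

end OrderTop

section EulerDeriv

variable {R : Type*} [CommRing R] [Algebra ℝ R]

noncomputable def eulerDerivHom : R⟦ℝ⟧ →+ R⟦ℝ⟧ where
  toFun x :=
    { coeff g := g • x.coeff g
      isPWO_support' :=
        x.isPWO_support.mono (Function.support_smul_subset_right (fun g : ℝ => g) x.coeff) }
  map_zero' := by ext g; simp
  map_add' x y := by ext g; simp [smul_add]

theorem support_eulerDerivHom_subset (x : R⟦ℝ⟧) : (eulerDerivHom x).support ⊆ x.support :=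
  Function.support_smul_subset_right (fun g : ℝ => g) x.coeff

/- The `ℝ`- and `ℤ`-algebra structures on `R⟦ℝ⟧` found by instance search go through power
series, so their scalar actions agree with the coefficientwise ones only propositionally; a
derivation over `ℤ` confines this to the one line `map_smul'`. -/
noncomputable def eulerDeriv : Derivation ℤ R⟦ℝ⟧ R⟦ℝ⟧ where
  toFun := eulerDerivHom
  map_add' := map_add eulerDerivHom
  map_smul' m x :=
    (congrArg eulerDerivHom (int_smul_eq_zsmul Algebra.toModule m x)).trans (map_zsmul _ m x)
  map_one_eq_zero' := by
    ext g
    change g • (1 : R⟦ℝ⟧).coeff g = 0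
    rcases eq_or_ne g 0 with rfl | hg
    · exact zero_smul _ _
    · rw [coeff_one, if_neg hg, smul_zero]
  leibniz' x y := by
    ext g
    change g • (x * y).coeff g = (x * eulerDerivHom y + y * eulerDerivHom x).coeff g
    rw [coeff_add, mul_comm y, coeff_mul_right' y.isPWO_support (support_eulerDerivHom_subset y),
      coeff_mul_left' x.isPWO_support (support_eulerDerivHom_subset x), coeff_mul,
      Finset.smul_sum, ← Finset.sum_add_distrib]
    refine Finset.sum_congr rfl fun ij hij => ?_
    change g • (x.coeff ij.1 * y.coeff ij.2) =
      x.coeff ij.1 * (ij.2 • y.coeff ij.2) + (ij.1 • x.coeff ij.1) * y.coeff ij.2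
    rw [← (Finset.mem_antidiagonal.1 hij).2.2, add_smul, mul_smul_comm, smul_mul_assoc, add_comm]

@[simp]
theorem coeff_eulerDeriv (x : R⟦ℝ⟧) (g : ℝ) : (eulerDeriv x).coeff g = g • x.coeff g :=
  rfl

theorem eulerDeriv_smul (r : R) (x : R⟦ℝ⟧) : eulerDeriv (r • x) = r • eulerDeriv x := by
  ext g
  simp only [coeff_eulerDeriv, coeff_smul]
  exact smul_comm g r _

theorem eq_single_of_eulerDeriv_eq_zero [NoZeroSMulDivisors ℝ R] {x : R⟦ℝ⟧}
    (h : eulerDeriv x = 0) : x = single 0 (x.coeff 0) := by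
  ext g
  rcases eq_or_ne g 0 with rfl | hg
  · rw [coeff_single_same]
  · rw [coeff_single_of_ne hg]
    simpa [hg] using congrArg (coeff · g) h

noncomputable def SummableFamily.eulerDeriv {α : Type*} (s : SummableFamily ℝ R α) :
    SummableFamily ℝ R α where
  toFun a := HahnSeries.eulerDeriv (s a)
  isPWO_iUnion_support' := s.isPWO_iUnion_support.mono
    (Set.iUnion_mono fun a => support_eulerDerivHom_subset (s a))
  finite_co_support' g := (s.finite_co_support g).subset fun a ha =>
    support_eulerDerivHom_subset (s a) ha

theorem eulerDeriv_hsum {α : Type*} (s : SummableFamily ℝ R α) :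
    eulerDeriv s.hsum = s.eulerDeriv.hsum := by
  ext g
  rw [coeff_eulerDeriv, SummableFamily.coeff_hsum, SummableFamily.coeff_hsum,
    smul_finsum' _ (s.finite_co_support g)]
  rfl

open PowerSeries in
theorem eulerDeriv_heval {x : R⟦ℝ⟧} (hx : 0 < x.orderTop) (f : PowerSeries R) :
    eulerDeriv (heval x f) = heval x (d⁄dX R f) * eulerDeriv x := by
  let succ : ℕ ↪ ℕ := ⟨Nat.succ, Nat.succ_injective⟩
  rw [heval_apply, heval_apply, eulerDeriv_hsum, mul_comm, ← SummableFamily.hsum_smul,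
    ← (eulerDeriv x • SummableFamily.powerSeriesFamily x (d⁄dX R f)).hsum_embDomain succ]
  congr 1
  ext1 n
  cases n with
  | zero =>
    rw [SummableFamily.embDomain_of_notMem_range _ _ (by simp [succ])]
    change eulerDeriv (SummableFamily.powerSeriesFamily x f 0) = 0
    simp [hx, eulerDeriv_smul]
  | succ n =>
    refine Eq.trans ?_ (SummableFamily.embDomain_image _ succ).symm
    change eulerDeriv (SummableFamily.powerSeriesFamily x f (n + 1)) = _
    rw [SummableFamily.smul_apply, of_symm_smul_of_eq_mul,
      SummableFamily.powerSeriesFamily_of_orderTop_pos hx,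
      SummableFamily.powerSeriesFamily_of_orderTop_pos hx, coeff_derivative, eulerDeriv_smul,
      Derivation.leibniz_pow, Nat.add_sub_cancel]
    simp only [← C_mul_eq_smul, nsmul_eq_mul, smul_eq_mul, map_mul, map_add, map_natCast, map_one]
    push_cast
    ring

end EulerDeriv

theorem eq_of_eulerDeriv_mul_eq {K : Type*} [Field K] [Algebra ℝ K] {y z : K⟦ℝ⟧}
    (hy : 0 < (y - 1).orderTop) (hz : 0 < (z - 1).orderTop)
    (h : eulerDeriv y * z = y * eulerDeriv z) : y = z := by
  have hq : eulerDeriv (y / z) = 0 := by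
    simp only [Derivation.leibniz_div, smul_eq_mul, mul_comm z, h, sub_self, mul_zero]
  have hyz : y = (y / z).coeff 0 • z := by
    rw [← single_zero_mul_eq_smul, ← eq_single_of_eulerDeriv_eq_zero hq,
      div_mul_cancel₀ y (ne_zero_of_orderTop_sub_one_pos hz)]
  have hc : (y / z).coeff 0 = 1 := by
    simpa [coeff_zero_eq_one_of_orderTop_sub_one_pos hy,
      coeff_zero_eq_one_of_orderTop_sub_one_pos hz] using (congrArg (coeff · 0) hyz).symm
  rwa [hc, one_smul] at hyz

end HahnSeries

section RestrictedExp

open HahnSeries PowerSeries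

theorem E_eq_heval {b : ℝ⟦ℝ⟧} (hb : 0 < b.orderTop) : E b = heval b (exp ℝ) := by
  rw [E, dif_pos hb, heval_apply]
  congr 1
  ext1 n
  simp [expFamily, hb]

theorem orderTop_E_sub_one_pos {b : ℝ⟦ℝ⟧} (hb : 0 < b.orderTop) :
    0 < (E b - 1).orderTop := by
  simpa [E_eq_heval hb] using zero_lt_orderTop_heval_sub_single hb (exp ℝ)

theorem eulerDeriv_E {b : ℝ⟦ℝ⟧} (hb : 0 < b.orderTop) :
    eulerDeriv (E b) = E b * eulerDeriv b := by
  rw [E_eq_heval hb, eulerDeriv_heval hb, derivative_exp]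

theorem E_add {b c : ℝ⟦ℝ⟧} (hb : 0 < b.orderTop) (hc : 0 < c.orderTop) :
    E (b + c) = E b * E c := by
  have hbc : 0 < (b + c).orderTop := lt_min hb hc |>.trans_le min_orderTop_le_orderTop_add
  refine eq_of_eulerDeriv_mul_eq (orderTop_E_sub_one_pos hbc)
    (orderTop_mul_sub_one_pos (orderTop_E_sub_one_pos hb) (orderTop_E_sub_one_pos hc)) ?_
  rw [eulerDeriv_E hbc, Derivation.leibniz, eulerDeriv_E hb, eulerDeriv_E hc, map_add,
    smul_eq_mul, smul_eq_mul]
  ring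

theorem eq_of_E_eq {b c : ℝ⟦ℝ⟧} (hb : 0 < b.orderTop) (hc : 0 < c.orderTop)
    (h : E b = E c) : b = c := by
  have hbc : 0 < (b - c).orderTop :=
    lt_min hb hc |>.trans_le min_orderTop_le_orderTop_sub
  have hE : E (b - c) = 1 := by
    apply mul_right_cancel₀ (ne_zero_of_orderTop_sub_one_pos (orderTop_E_sub_one_pos hc))
    rw [← E_add hbc hc, sub_add_cancel, h, one_mul]
  have hD : eulerDeriv (b - c) = 0 := by
    have := eulerDeriv_E hbc
    rwa [hE, Derivation.map_one_eq_zero, one_mul, eq_comm] at this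
  rw [← sub_eq_zero, eq_single_of_eulerDeriv_eq_zero hD,
    zero_lt_orderTop_iff_forall.1 hbc 0 le_rfl, single_eq_zero]

theorem E_heval_log {u : ℝ⟦ℝ⟧} (hu : 0 < u.orderTop) : E (heval u (log ℝ)) = 1 + u := by
  have hlog : 0 < (heval u (log ℝ)).orderTop := by
    simpa using zero_lt_orderTop_heval_sub_single hu (log ℝ)
  have hgeom : (1 + u) * heval u (d⁄dX ℝ (log ℝ)) = 1 := by
    have h1u : (1 : ℝ⟦ℝ⟧) + u = heval u (1 + X) := by rw [map_add, map_one, heval_X u hu]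
    rw [h1u, ← map_mul, one_add_X_mul_derivative_log, map_one]
  refine eq_of_eulerDeriv_mul_eq (orderTop_E_sub_one_pos hlog) (by simpa using hu) ?_
  rw [eulerDeriv_E hlog, eulerDeriv_heval hu, map_add, Derivation.map_one_eq_zero, zero_add]
  linear_combination (E (heval u (log ℝ)) * eulerDeriv u) * hgeom

theorem expO_add {a b : ℝ⟦ℝ⟧} (ha : 0 ≤ a.orderTop) (hb : 0 ≤ b.orderTop) :
    expO (a + b) = expO a * expO b := by
  have hsplit : a + b - single 0 ((a + b).coeff 0) =
      (a - single 0 (a.coeff 0)) + (b - single 0 (b.coeff 0)) := by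
    rw [coeff_add, single_add]; abel
  rw [expO, expO, expO, hsplit, E_add (zero_lt_orderTop_sub_single_coeff_zero ha)
    (zero_lt_orderTop_sub_single_coeff_zero hb), coeff_add, Real.exp_add, ← zero_add (0 : ℝ),
    ← single_mul_single, zero_add]
  ring

theorem orderTop_expO {a : ℝ⟦ℝ⟧} (ha : 0 ≤ a.orderTop) : (expO a).orderTop = 0 := by
  rw [expO, orderTop_mul, orderTop_single (Real.exp_ne_zero _),
    ((orderTop_self_sub_one_pos_iff _).1
      (orderTop_E_sub_one_pos (zero_lt_orderTop_sub_single_coeff_zero ha))).1, add_zero,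
    WithTop.coe_zero]

theorem leadingCoeff_expO {a : ℝ⟦ℝ⟧} (ha : 0 ≤ a.orderTop) :
    (expO a).leadingCoeff = Real.exp (a.coeff 0) := by
  rw [expO, leadingCoeff_mul, leadingCoeff_of_single,
    ((orderTop_self_sub_one_pos_iff _).1
      (orderTop_E_sub_one_pos (zero_lt_orderTop_sub_single_coeff_zero ha))).2, mul_one]

theorem expO_injOn : Set.InjOn expO {a : ℝ⟦ℝ⟧ | 0 ≤ a.orderTop} := by
  intro a ha b hb h
  have h0 : a.coeff 0 = b.coeff 0 :=
    Real.exp_injective (by rw [← leadingCoeff_expO ha, ← leadingCoeff_expO hb, h])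
  have ha' := zero_lt_orderTop_sub_single_coeff_zero ha
  rw [expO, expO, h0] at h
  rw [h0] at ha'
  exact sub_left_inj.1 <| eq_of_E_eq ha' (zero_lt_orderTop_sub_single_coeff_zero hb) <|
    mul_left_cancel₀ (single_ne_zero (Real.exp_ne_zero _)) h

theorem exists_expO_eq {x : ℝ⟦ℝ⟧} (hx : x.orderTop = 0) (hc : 0 < x.leadingCoeff) :
    ∃ a : ℝ⟦ℝ⟧, 0 ≤ a.orderTop ∧ expO a = x := by
  set c := x.leadingCoeff
  set u := single 0 c⁻¹ * x - 1
  have hu : 0 < u.orderTop := by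
    rw [orderTop_self_sub_one_pos_iff, orderTop_mul, leadingCoeff_mul, hx,
      orderTop_single (inv_ne_zero hc.ne'), leadingCoeff_of_single, inv_mul_cancel₀ hc.ne']
    exact ⟨add_zero 0, rfl⟩
  have hlog : 0 < (heval u (log ℝ)).orderTop := by
    simpa using zero_lt_orderTop_heval_sub_single hu (log ℝ)
  have h0 : (single 0 (Real.log c) + heval u (log ℝ)).coeff 0 = Real.log c := by
    rw [coeff_add, coeff_single_same, zero_lt_orderTop_iff_forall.1 hlog 0 le_rfl, add_zero]
  refine ⟨single 0 (Real.log c) + heval u (log ℝ),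
    le_min orderTop_single_le hlog.le |>.trans min_orderTop_le_orderTop_add, ?_⟩
  rw [expO, h0, add_sub_cancel_left, E_heval_log hu, Real.exp_log hc, add_sub_cancel,
    ← mul_assoc, single_mul_single, mul_inv_cancel₀ hc.ne', add_zero, single_zero_one, one_mul]

theorem image_expO : expO '' {a : ℝ⟦ℝ⟧ | 0 ≤ a.orderTop} =
    {x | x ≠ 0 ∧ x.order = 0 ∧ 0 < x.leadingCoeff} := by
  ext x
  simp only [Set.mem_ofPred_eq, ← and_assoc, ← orderTop_eq_zero_iff]
  constructor
  · rintro ⟨a, ha, rfl⟩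
    exact ⟨orderTop_expO ha, leadingCoeff_expO ha ▸ Real.exp_pos _⟩
  · rintro ⟨hx, hc⟩
    exact exists_expO_eq hx hc

end RestrictedExp

theorem stmt_10 :
    -- for `a ∈ O`, the nonconstant part of `a` lies in the maximal ideal
    (∀ a : HahnSeries ℝ ℝ, 0 ≤ a.orderTop →
      0 < (a - HahnSeries.single (0 : ℝ) (a.coeff 0)).orderTop) ∧
    -- `expO` is additive-to-multiplicative on `O`
    (∀ a b : HahnSeries ℝ ℝ, 0 ≤ a.orderTop → 0 ≤ b.orderTop →
      expO (a + b) = expO a * expO b) ∧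
    -- `expO` is injective on `O`
    (∀ a b : HahnSeries ℝ ℝ, 0 ≤ a.orderTop → 0 ≤ b.orderTop →
      expO a = expO b → a = b) ∧
    -- the image of `O` under `expO` is exactly the group `U⁺` of positive units
    (∀ x : HahnSeries ℝ ℝ,
      (∃ a : HahnSeries ℝ ℝ, 0 ≤ a.orderTop ∧ expO a = x) ↔
        (x ≠ 0 ∧ x.order = 0 ∧ 0 < x.leadingCoeff)) :=
  ⟨fun _ => zero_lt_orderTop_sub_single_coeff_zero, fun _ _ => expO_add,
    fun _ _ ha hb => expO_injOn ha hb, fun x => Set.ext_iff.1 image_expO x⟩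
end
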